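/- For all real x ≠ y, the boundary-value limit of the free resolvent kernel satisfies (1/π) lim_{η↓0} Im[G_{ε+iη}(x,y)] = cos((x-y)√ε)/(2π√ε) for ε > 0, and the limit is 0 for ε < 0, where G_z(x,y) = i e^{i|x-y|√z}/(2√z) with the principal branch of √z on the upper half plane. -/

import Mathlib

/-!
For `ε ≠ 0` the kernel is continuous at `z = ε` within the closed upper half-plane: the principal
logarithm, hence `√z`, extends continuously to the negative real axis from above. So the boundary
value is the kernel at `z = ε`, where `√ε` is real for `ε > 0`, giving the cosine, and equals
`i √(-ε)` for `ε < 0`, making the kernel the real, exponentially decaying `e^{-|x-y|√(-ε)}/(2√(-ε))`.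
-/

open Complex Filter Topology Real

/-- The free resolvent kernel `G_z(x,y) = i e^{i|x-y|√z}/(2√z)` on the real line,
with the principal branch of the square root. -/
noncomputable def freeResolventKernel (z : ℂ) (x y : ℝ) : ℂ :=
  Complex.I * Complex.exp (Complex.I * |x - y| * z ^ (1/2 : ℂ)) / (2 * z ^ (1/2 : ℂ))

namespace Complex

theorem continuousWithinAt_log_im_nonneg {z : ℂ} (hz : z ≠ 0) :
    ContinuousWithinAt log {w : ℂ | 0 ≤ w.im} z := by
  by_cases hslit : z ∈ slitPlane
  · exact (continuousAt_clog hslit).continuousWithinAt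
  · have hre : z.re < 0 ∧ z.im = 0 := by
      rw [mem_slitPlane_iff, not_or, not_lt, not_ne_iff] at hslit
      exact ⟨hslit.1.lt_of_ne fun hre ↦ hz (ext hre hslit.2), hslit.2⟩
    exact continuousWithinAt_log_of_re_neg_of_im_zero hre.1 hre.2

theorem continuousWithinAt_cpow_const_im_nonneg {z : ℂ} (hz : z ≠ 0) (w : ℂ) :
    ContinuousWithinAt (· ^ w) {v : ℂ | 0 ≤ v.im} z := by
  have hexp : ContinuousWithinAt (fun v ↦ exp (log v * w)) {v : ℂ | 0 ≤ v.im} z :=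
    continuous_exp.continuousAt.comp_continuousWithinAt
      ((continuousWithinAt_log_im_nonneg hz).mul continuousWithinAt_const)
  refine hexp.congr_of_eventuallyEq ?_ (cpow_def_of_ne_zero hz w)
  filter_upwards [nhdsWithin_le_nhds (eventually_ne_nhds hz)] with v hv
  exact cpow_def_of_ne_zero hv w

theorem ofReal_cpow_one_half_of_nonneg {r : ℝ} (hr : 0 ≤ r) :
    (r : ℂ) ^ (1 / 2 : ℂ) = √r := by
  rw [Real.sqrt_eq_rpow, ofReal_cpow hr, ofReal_div, ofReal_one, ofReal_ofNat]

theorem ofReal_cpow_one_half_of_nonpos {r : ℝ} (hr : r ≤ 0) :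
    (r : ℂ) ^ (1 / 2 : ℂ) = √(-r) * I := by
  rw [ofReal_cpow_of_nonpos hr, ← ofReal_neg, ofReal_cpow_one_half_of_nonneg (neg_nonneg.2 hr),
    mul_one_div, ← div_mul_eq_mul_div, exp_pi_div_two_mul_I]

theorem tendsto_ofReal_add_mul_I_nhdsWithin_im_nonneg (r : ℝ) :
    Tendsto (fun η : ℝ ↦ (r : ℂ) + η * I) (𝓝[>] 0) (𝓝[{w : ℂ | 0 ≤ w.im}] r) := by
  refine tendsto_nhdsWithin_iff.2 ⟨?_, ?_⟩
  · have hcont : Continuous (fun η : ℝ ↦ (r : ℂ) + η * I) := by fun_prop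
    simpa using (hcont.tendsto 0).mono_left nhdsWithin_le_nhds
  · filter_upwards [self_mem_nhdsWithin] with η hη
    simpa using le_of_lt hη

end Complex

theorem continuousWithinAt_freeResolventKernel (x y : ℝ) {z : ℂ} (hz : z ≠ 0) :
    ContinuousWithinAt (freeResolventKernel · x y) {w : ℂ | 0 ≤ w.im} z := by
  have hsqrt := continuousWithinAt_cpow_const_im_nonneg hz (1 / 2)
  have hsqrt_ne : z ^ (1 / 2 : ℂ) ≠ 0 := by simp [cpow_eq_zero_iff, hz]
  unfold freeResolventKernel
  exact (continuousWithinAt_const.mul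
    (continuous_exp.continuousAt.comp_continuousWithinAt
      (continuousWithinAt_const.mul hsqrt))).div
    (continuousWithinAt_const.mul hsqrt) (mul_ne_zero two_ne_zero hsqrt_ne)

theorem freeResolventKernel_ofReal_of_pos (x y : ℝ) {ε : ℝ} (hε : 0 < ε) :
    freeResolventKernel ε x y = I * exp ((|x - y| * √ε : ℝ) * I) / (2 * √ε : ℝ) := by
  rw [freeResolventKernel, ofReal_cpow_one_half_of_nonneg hε.le]
  push_cast
  ring_nf

theorem im_freeResolventKernel_ofReal_of_pos (x y : ℝ) {ε : ℝ} (hε : 0 < ε) :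
    (freeResolventKernel ε x y).im = Real.cos ((x - y) * √ε) / (2 * √ε) := by
  rw [freeResolventKernel_ofReal_of_pos x y hε, div_ofReal_im, mul_im, I_re, I_im,
    exp_ofReal_mul_I_re, ← Real.cos_abs ((x - y) * √ε), abs_mul, abs_of_nonneg (sqrt_nonneg ε)]
  ring

theorem freeResolventKernel_ofReal_of_neg (x y : ℝ) {ε : ℝ} (hε : ε < 0) :
    freeResolventKernel ε x y = (Real.exp (-(|x - y| * √(-ε))) / (2 * √(-ε)) : ℝ) := by
  have hexponent : I * |x - y| * (√(-ε) * I) = (-(|x - y| * √(-ε)) : ℝ) := by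
    push_cast
    linear_combination (|x - y| * √(-ε) : ℂ) * I_mul_I
  rw [freeResolventKernel, ofReal_cpow_one_half_of_nonpos hε.le, hexponent, ← ofReal_exp]
  push_cast
  field_simp

theorem tendsto_im_freeResolventKernel_boundary (x y : ℝ) {ε : ℝ} (hε : ε ≠ 0) :
    Tendsto (fun η : ℝ ↦ (freeResolventKernel (ε + η * I) x y).im) (𝓝[>] 0)
      (𝓝 (freeResolventKernel ε x y).im) :=
  (continuous_im.tendsto _).comp ((continuousWithinAt_freeResolventKernel x y
    (ofReal_ne_zero.2 hε)).tendsto.comp (tendsto_ofReal_add_mul_I_nhdsWithin_im_nonneg ε))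

theorem free_resolvent_boundary_values_general (x y : ℝ) (ε : ℝ) :
    (0 < ε →
      Tendsto (fun η : ℝ => (1 / Real.pi) * (freeResolventKernel (ε + η * Complex.I) x y).im)
        (𝓝[>] 0)
        (𝓝 (Real.cos ((x - y) * Real.sqrt ε) / (2 * Real.pi * Real.sqrt ε)))) ∧
    (ε < 0 →
      Tendsto (fun η : ℝ => (1 / Real.pi) * (freeResolventKernel (ε + η * Complex.I) x y).im)
        (𝓝[>] 0) (𝓝 0)) := by
  refine ⟨fun hε ↦ ?_, fun hε ↦ ?_⟩
  · have h := (tendsto_im_freeResolventKernel_boundary x y hε.ne').const_mul (1 / π)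
    rw [im_freeResolventKernel_ofReal_of_pos x y hε] at h
    convert h using 2
    field_simp
  · have h := (tendsto_im_freeResolventKernel_boundary x y hε.ne).const_mul (1 / π)
    rwa [freeResolventKernel_ofReal_of_neg x y hε, ofReal_im, mul_zero] at h

theorem free_resolvent_boundary_values (x y : ℝ) (hxy : x ≠ y) (ε : ℝ) :
    (0 < ε →
      Tendsto (fun η : ℝ => (1 / Real.pi) * (freeResolventKernel (ε + η * Complex.I) x y).im)
        (𝓝[>] 0)
        (𝓝 (Real.cos ((x - y) * Real.sqrt ε) / (2 * Real.pi * Real.sqrt ε)))) ∧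
    (ε < 0 →
      Tendsto (fun η : ℝ => (1 / Real.pi) * (freeResolventKernel (ε + η * Complex.I) x y).im)
        (𝓝[>] 0) (𝓝 0)) :=
  free_resolvent_boundary_values_general x y ε
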